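/- arXiv:2010.12735 — 9 statements merged into one kernel-verified Lean document; each statement's English description precedes it below -/
import Mathlib

section
/- Let ν ∈ ℝ³ be a unit vector, θ ∈ ℝ with θ ≠ 1, and u = (u¹,u²) ∈ ℂ⁴ with u¹,u² ∈ ℂ². Then θ (I₄ + i α₀ (α·ν)) u = (I₄ + i α₀ (α·ν)) α₀ u if and only if u¹ + a · i (σ·ν) u² = 0, where a = (θ+1)/(θ−1). -/
open Matrix Complex

/-- The Pauli matrix σ₁. -/
noncomputable def σ1 : Matrix (Fin 2) (Fin 2) ℂ := !![0, 1; 1, 0]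
/-- The Pauli matrix σ₂. -/
noncomputable def σ2 : Matrix (Fin 2) (Fin 2) ℂ := !![0, -Complex.I; Complex.I, 0]
/-- The Pauli matrix σ₃. -/
noncomputable def σ3 : Matrix (Fin 2) (Fin 2) ℂ := !![1, 0; 0, -1]

/-- The Dirac matrix α₀ = [[I₂,0],[0,-I₂]]. -/
noncomputable def α0 : Matrix (Fin 4) (Fin 4) ℂ :=
  !![1, 0, 0, 0; 0, 1, 0, 0; 0, 0, -1, 0; 0, 0, 0, -1]
/-- The Dirac matrix α₁ = [[0,σ₁],[σ₁,0]]. -/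
noncomputable def α1 : Matrix (Fin 4) (Fin 4) ℂ :=
  !![0, 0, 0, 1; 0, 0, 1, 0; 0, 1, 0, 0; 1, 0, 0, 0]
/-- The Dirac matrix α₂ = [[0,σ₂],[σ₂,0]]. -/
noncomputable def α2 : Matrix (Fin 4) (Fin 4) ℂ :=
  !![0, 0, 0, -Complex.I; 0, 0, Complex.I, 0;
     0, -Complex.I, 0, 0; Complex.I, 0, 0, 0]
/-- The Dirac matrix α₃ = [[0,σ₃],[σ₃,0]]. -/
noncomputable def α3 : Matrix (Fin 4) (Fin 4) ℂ :=
  !![0, 0, 1, 0; 0, 0, 0, -1; 1, 0, 0, 0; 0, -1, 0, 0]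

/-- For a unit vector ν ∈ ℝ³, θ ∈ ℝ with θ ≠ 1 and u = (u¹,u²) ∈ ℂ⁴, the boundary
condition θ (I₄ + i α₀ (α·ν)) u = (I₄ + i α₀ (α·ν)) α₀ u is equivalent to
u¹ + a i (σ·ν) u² = 0 with a = (θ+1)/(θ−1). -/
theorem behrndt_boundary_condition_equiv (ν1 ν2 ν3 : ℝ)
    (hν : ν1 ^ 2 + ν2 ^ 2 + ν3 ^ 2 = 1) (θ : ℝ) (hθ : θ ≠ 1) (u1 u2 : Fin 2 → ℂ) :
    ((θ : ℂ) • ((1 + Complex.I •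
          (α0 * ((ν1 : ℂ) • α1 + (ν2 : ℂ) • α2 + (ν3 : ℂ) • α3))).mulVec
        ![u1 0, u1 1, u2 0, u2 1]) =
      ((1 + Complex.I •
          (α0 * ((ν1 : ℂ) • α1 + (ν2 : ℂ) • α2 + (ν3 : ℂ) • α3))) * α0).mulVec
        ![u1 0, u1 1, u2 0, u2 1]) ↔
      u1 + (((θ + 1) / (θ - 1) : ℝ) : ℂ) • (Complex.I •
        ((ν1 : ℂ) • σ1 + (ν2 : ℂ) • σ2 + (ν3 : ℂ) • σ3).mulVec u2) = 0 := by
  have hden : (θ:ℂ) - 1 ≠ 0 := sub_ne_zero.mpr (by exact_mod_cast hθ)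
  have hνC : (ν1:ℂ) ^ 2 + (ν2:ℂ) ^ 2 + (ν3:ℂ) ^ 2 = 1 := by exact_mod_cast hν
  have h3 : (Fin.succ 2 : Fin 4) = 3 := by decide
  simp only [funext_iff, Fin.forall_fin_succ, Fin.forall_fin_two]
  simp [mulVec, dotProduct, Fin.sum_univ_four, Fin.sum_univ_two, α0, α1, α2, α3, σ1, σ2, σ3,
    Matrix.add_apply, Matrix.smul_apply, Matrix.one_apply, Matrix.mul_apply, Pi.add_apply,
    Pi.smul_apply, Pi.zero_apply, smul_eq_mul, h3]
  set a : ℂ := ((θ:ℂ) + 1) / ((θ:ℂ) - 1) with ha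
  have hA : a * ((θ:ℂ) - 1) = (θ:ℂ) + 1 := by rw [ha]; field_simp
  constructor
  · rintro ⟨e1, e2, e3, e4⟩
    constructor
    · have key : ((θ:ℂ) - 1) * (u1 0 + a * (Complex.I * ((ν3:ℂ) * u2 0 + ((ν1:ℂ) + -((ν2:ℂ) * Complex.I)) * u2 1))) = 0 := by
        linear_combination e1 + (Complex.I * ((ν3:ℂ) * u2 0 + ((ν1:ℂ) - (ν2:ℂ) * Complex.I) * u2 1)) * hA
      exact (mul_eq_zero.mp key).resolve_left hden
    · have key : ((θ:ℂ) - 1) * (u1 1 + a * (Complex.I * (((ν1:ℂ) + (ν2:ℂ) * Complex.I) * u2 0 + -((ν3:ℂ) * u2 1)))) = 0 := by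
        linear_combination e2 + (Complex.I * (((ν1:ℂ) + (ν2:ℂ) * Complex.I) * u2 0 - (ν3:ℂ) * u2 1)) * hA
      exact (mul_eq_zero.mp key).resolve_left hden
  · rintro ⟨f1, f2⟩
    refine ⟨?_, ?_, ?_, ?_⟩
    · linear_combination ((θ:ℂ) - 1) * f1 + (-(Complex.I * ((ν3:ℂ) * u2 0 + ((ν1:ℂ) - (ν2:ℂ) * Complex.I) * u2 1))) * hA
    · linear_combination ((θ:ℂ) - 1) * f2 + (-(Complex.I * (((ν1:ℂ) + (ν2:ℂ) * Complex.I) * u2 0 - (ν3:ℂ) * u2 1))) * hA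
    · linear_combination (-((θ:ℂ) - 1) * Complex.I * (ν3:ℂ)) * f1 + (((θ:ℂ) - 1) * Complex.I * ((ν2:ℂ) * Complex.I - (ν1:ℂ))) * f2 + (((θ:ℂ) - 1) * a * ((ν1:ℂ)^2 + (ν2:ℂ)^2 + (ν3:ℂ)^2 - (ν2:ℂ)^2 * Complex.I^2) * u2 0) * Complex.I_sq + (-((θ:ℂ) - 1) * a * u2 0) * hνC + (-(u2 0)) * hA
    · linear_combination (((θ:ℂ) - 1) * Complex.I * (-((ν2:ℂ) * Complex.I) - (ν1:ℂ))) * f1 + (((θ:ℂ) - 1) * Complex.I * (ν3:ℂ)) * f2 + (((θ:ℂ) - 1) * a * ((ν1:ℂ)^2 + (ν2:ℂ)^2 + (ν3:ℂ)^2 - (ν2:ℂ)^2 * Complex.I^2) * u2 1) * Complex.I_sq + (-((θ:ℂ) - 1) * a * u2 1) * hνC + (-(u2 1)) * hA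
end

section
/- Let ν ∈ ℝ³ be a unit vector and let b be a 2×2 complex matrix satisfying b* (σ·ν) + (σ·ν) b = 0, where b* denotes the conjugate transpose. If u = (u¹,u²) and v = (v¹,v²) in ℂ⁴ satisfy u¹ + b u² = 0 and v¹ + b v² = 0, then ⟨(α·ν) u, v⟩ = 0, where ⟨·,·⟩ is the standard Hermitian inner product on ℂ⁴. -/
open Matrix Complex

/-!
Writing `S = σ·ν`, the matrix `α·ν` swaps the two halves of a spinor and applies `S` to each, so
`⟨(α·ν) u, v⟩ = ⟨S u², v¹⟩ + ⟨S u¹, v²⟩`. Substituting `u¹ = -b u²` and `v¹ = -b v²` turns this into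
`-⟨(b* S + S b) u², v²⟩`, which vanishes by the hypothesis on `b`.
-/

theorem dotProduct_offDiagonal_eq_zero_of_graph {n R : Type*} [Fintype n] [Ring R] [StarRing R]
    {S b : Matrix n n R} (hb : bᴴ * S + S * b = 0)
    {u₁ u₂ v₁ v₂ : n → R} (hu : u₁ + b *ᵥ u₂ = 0) (hv : v₁ + b *ᵥ v₂ = 0) :
    star v₁ ⬝ᵥ S *ᵥ u₂ + star v₂ ⬝ᵥ S *ᵥ u₁ = 0 := by
  rw [eq_neg_of_add_eq_zero_left hu, eq_neg_of_add_eq_zero_left hv]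
  calc star (-(b *ᵥ v₂)) ⬝ᵥ S *ᵥ u₂ + star v₂ ⬝ᵥ S *ᵥ -(b *ᵥ u₂)
      = -(star v₂ ⬝ᵥ (bᴴ * S + S * b) *ᵥ u₂) := by
        simp only [star_neg, star_mulVec, mulVec_neg, neg_dotProduct, dotProduct_neg, add_mulVec,
          ← mulVec_mulVec, dotProduct_add, ← dotProduct_mulVec]
        abel
    _ = 0 := by rw [hb, zero_mulVec, dotProduct_zero, neg_zero]

noncomputable def pauliDot (ν1 ν2 ν3 : ℝ) : Matrix (Fin 2) (Fin 2) ℂ :=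
  (ν1 : ℂ) • σ1 + (ν2 : ℂ) • σ2 + (ν3 : ℂ) • σ3

noncomputable def diracDot (ν1 ν2 ν3 : ℝ) : Matrix (Fin 4) (Fin 4) ℂ :=
  (ν1 : ℂ) • α1 + (ν2 : ℂ) • α2 + (ν3 : ℂ) • α3

theorem diracDot_mulVec (ν1 ν2 ν3 : ℝ) (x y : Fin 2 → ℂ) :
    diracDot ν1 ν2 ν3 *ᵥ ![x 0, x 1, y 0, y 1] =
      ![(pauliDot ν1 ν2 ν3 *ᵥ y) 0, (pauliDot ν1 ν2 ν3 *ᵥ y) 1,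
        (pauliDot ν1 ν2 ν3 *ᵥ x) 0, (pauliDot ν1 ν2 ν3 *ᵥ x) 1] := by
  ext i
  fin_cases i <;>
    simp [diracDot, pauliDot, α1, α2, α3, σ1, σ2, σ3, mulVec, dotProduct, Fin.sum_univ_four]

theorem dotProduct_vecCons_four {R : Type*} [NonUnitalNonAssocSemiring R] (x y x' y' : Fin 2 → R) :
    ![x 0, x 1, y 0, y 1] ⬝ᵥ ![x' 0, x' 1, y' 0, y' 1] = x ⬝ᵥ x' + y ⬝ᵥ y' := by
  simp [dotProduct, Fin.sum_univ_four, Fin.sum_univ_two, add_assoc]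

theorem boundary_symmetry_inner_product_general (ν1 ν2 ν3 : ℝ)
    (b : Matrix (Fin 2) (Fin 2) ℂ)
    (hb : bᴴ * ((ν1 : ℂ) • σ1 + (ν2 : ℂ) • σ2 + (ν3 : ℂ) • σ3) +
        ((ν1 : ℂ) • σ1 + (ν2 : ℂ) • σ2 + (ν3 : ℂ) • σ3) * b = 0)
    (u1 u2 v1 v2 : Fin 2 → ℂ)
    (hu : u1 + b.mulVec u2 = 0) (hv : v1 + b.mulVec v2 = 0) :
    (star ![v1 0, v1 1, v2 0, v2 1]) ⬝ᵥ
      (((ν1 : ℂ) • α1 + (ν2 : ℂ) • α2 + (ν3 : ℂ) • α3).mulVec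
        ![u1 0, u1 1, u2 0, u2 1]) = 0 := by
  have hstar : star ![v1 0, v1 1, v2 0, v2 1] = ![star v1 0, star v1 1, star v2 0, star v2 1] := by
    ext i; fin_cases i <;> rfl
  change star _ ⬝ᵥ diracDot ν1 ν2 ν3 *ᵥ _ = 0
  rw [hstar, diracDot_mulVec, dotProduct_vecCons_four]
  exact dotProduct_offDiagonal_eq_zero_of_graph hb hu hv

/-- Let ν ∈ ℝ³ be a unit vector and b a 2×2 complex matrix with
b* (σ·ν) + (σ·ν) b = 0.  If u = (u¹,u²) and v = (v¹,v²) in ℂ⁴ satisfy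
u¹ + b u² = 0 and v¹ + b v² = 0, then ⟨(α·ν) u, v⟩ = 0 for the standard
Hermitian inner product on ℂ⁴. -/
theorem boundary_symmetry_inner_product (ν1 ν2 ν3 : ℝ)
    (hν : ν1 ^ 2 + ν2 ^ 2 + ν3 ^ 2 = 1) (b : Matrix (Fin 2) (Fin 2) ℂ)
    (hb : bᴴ * ((ν1 : ℂ) • σ1 + (ν2 : ℂ) • σ2 + (ν3 : ℂ) • σ3) +
        ((ν1 : ℂ) • σ1 + (ν2 : ℂ) • σ2 + (ν3 : ℂ) • σ3) * b = 0)
    (u1 u2 v1 v2 : Fin 2 → ℂ)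
    (hu : u1 + b.mulVec u2 = 0) (hv : v1 + b.mulVec v2 = 0) :
    (star ![v1 0, v1 1, v2 0, v2 1]) ⬝ᵥ
      (((ν1 : ℂ) • α1 + (ν2 : ℂ) • α2 + (ν3 : ℂ) • α3).mulVec
        ![u1 0, u1 1, u2 0, u2 1]) = 0 :=
  boundary_symmetry_inner_product_general ν1 ν2 ν3 b hb u1 u2 v1 v2 hu hv
end

section
/- Fix ξ' = (ξ₁,ξ₂) ∈ ℝ² and μ ∈ ℝ, let ρ = √(ξ₁²+ξ₂²+μ²), Λ = ξ₁σ₁ + ξ₂σ₂ − iρσ₃, and define the 4×4 block matrices Θ₋ = [[−iμ I₂, Λ],[Λ, −iμ I₂]] and Θ = [[iμ I₂, Λ],[Λ, iμ I₂]]. Then Θ₋ Θ = 0; moreover, if (ξ',μ) ≠ (0,0), then the kernel of Θ₋ equals the range of Θ and both have dimension 2 over ℂ. -/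
open Matrix Complex

/-- Assemble a 4×4 matrix from four 2×2 blocks. -/
noncomputable def blockMat (A B C D : Matrix (Fin 2) (Fin 2) ℂ) :
    Matrix (Fin 4) (Fin 4) ℂ :=
  Matrix.reindex finSumFinEquiv finSumFinEquiv (Matrix.fromBlocks A B C D)

lemma blockMat_eq (A B C D : Matrix (Fin 2) (Fin 2) ℂ) :
    blockMat A B C D = !![A 0 0, A 0 1, B 0 0, B 0 1;
                          A 1 0, A 1 1, B 1 0, B 1 1;
                          C 0 0, C 0 1, D 0 0, D 0 1;
                          C 1 0, C 1 1, D 1 0, D 1 1] := by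
  ext i j
  fin_cases i <;> fin_cases j <;>
    simp [blockMat, Matrix.fromBlocks, finSumFinEquiv] <;> rfl

/-- For ξ' ∈ ℝ², μ ∈ ℝ, ρ = √(|ξ'|²+μ²), Λ = ξ₁σ₁+ξ₂σ₂−iρσ₃,
Θ₋ = [[−iμI₂,Λ],[Λ,−iμI₂]] and Θ = [[iμI₂,Λ],[Λ,iμI₂]]: one has Θ₋Θ = 0, and if
(ξ',μ) ≠ 0 then ker Θ₋ = range Θ and both have dimension 2 over ℂ. -/
theorem parameter_dependent_symbol_kernel (ξ1 ξ2 μ : ℝ) :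
    let ρ : ℝ := Real.sqrt (ξ1 ^ 2 + ξ2 ^ 2 + μ ^ 2)
    let Λ : Matrix (Fin 2) (Fin 2) ℂ :=
      (ξ1 : ℂ) • σ1 + (ξ2 : ℂ) • σ2 - (Complex.I * (ρ : ℂ)) • σ3
    let Θm : Matrix (Fin 4) (Fin 4) ℂ :=
      blockMat ((-(Complex.I * (μ : ℂ))) • 1) Λ Λ ((-(Complex.I * (μ : ℂ))) • 1)
    let Θ : Matrix (Fin 4) (Fin 4) ℂ :=
      blockMat ((Complex.I * (μ : ℂ)) • 1) Λ Λ ((Complex.I * (μ : ℂ)) • 1)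
    Θm * Θ = 0 ∧
      ((ξ1, ξ2, μ) ≠ (0, 0, 0) →
        LinearMap.ker Θm.mulVecLin = LinearMap.range Θ.mulVecLin ∧
        Module.finrank ℂ (LinearMap.ker Θm.mulVecLin) = 2 ∧
        Module.finrank ℂ (LinearMap.range Θ.mulVecLin) = 2) := by
  intro ρ Λ Θm Θ
  have hρ0 : (0:ℝ) ≤ ξ1 ^ 2 + ξ2 ^ 2 + μ ^ 2 := by positivity
  have hρ2 : ρ ^ 2 = ξ1 ^ 2 + ξ2 ^ 2 + μ ^ 2 := Real.sq_sqrt hρ0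
  have hΛ : Λ = !![-(Complex.I*ρ), (ξ1:ℂ) - Complex.I*ξ2;
                   (ξ1:ℂ) + Complex.I*ξ2, Complex.I*ρ] := by
    show (ξ1 : ℂ) • σ1 + (ξ2 : ℂ) • σ2 - (Complex.I * (ρ : ℂ)) • σ3 = _
    ext i j
    fin_cases i <;> fin_cases j <;> simp [σ1, σ2, σ3] <;> ring
  have hΘm : Θm = !![-(Complex.I*μ), 0, -(Complex.I*ρ), (ξ1:ℂ) - Complex.I*ξ2;
       0, -(Complex.I*μ), (ξ1:ℂ) + Complex.I*ξ2, Complex.I*ρ;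
       -(Complex.I*ρ), (ξ1:ℂ) - Complex.I*ξ2, -(Complex.I*μ), 0;
       (ξ1:ℂ) + Complex.I*ξ2, Complex.I*ρ, 0, -(Complex.I*μ)] := by
    show blockMat ((-(Complex.I * (μ : ℂ))) • 1) Λ Λ ((-(Complex.I * (μ : ℂ))) • 1) = _
    rw [hΛ, blockMat_eq]
    norm_num [Matrix.smul_apply, Matrix.one_apply]
  have hΘ : Θ = !![Complex.I*μ, 0, -(Complex.I*ρ), (ξ1:ℂ) - Complex.I*ξ2;
       0, Complex.I*μ, (ξ1:ℂ) + Complex.I*ξ2, Complex.I*ρ;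
       -(Complex.I*ρ), (ξ1:ℂ) - Complex.I*ξ2, Complex.I*μ, 0;
       (ξ1:ℂ) + Complex.I*ξ2, Complex.I*ρ, 0, Complex.I*μ] := by
    show blockMat ((Complex.I * (μ : ℂ)) • 1) Λ Λ ((Complex.I * (μ : ℂ)) • 1) = _
    rw [hΛ, blockMat_eq]
    norm_num [Matrix.smul_apply, Matrix.one_apply]
  have hmul : Θm * Θ = 0 := by
    rw [hΘm, hΘ]
    ext i j
    fin_cases i <;> fin_cases j <;>
      simp [Matrix.mul_apply, Fin.sum_univ_four, Complex.ext_iff] <;>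
      (try constructor) <;>
        first | linear_combination hρ2 | linear_combination -hρ2 | ring
  refine ⟨hmul, fun hne => ?_⟩
  -- ρ is positive
  have hsum : (0:ℝ) < ξ1 ^ 2 + ξ2 ^ 2 + μ ^ 2 := by
    rcases lt_or_eq_of_le hρ0 with h | h
    · exact h
    · exfalso; apply hne
      have h1 : ξ1 = 0 := by nlinarith [sq_nonneg ξ1, sq_nonneg ξ2, sq_nonneg μ]
      have h2 : ξ2 = 0 := by nlinarith [sq_nonneg ξ1, sq_nonneg ξ2, sq_nonneg μ]
      have h3 : μ = 0 := by nlinarith [sq_nonneg ξ1, sq_nonneg ξ2, sq_nonneg μ]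
      simp [h1, h2, h3]
  have hρpos : (0:ℝ) < ρ := Real.sqrt_pos.mpr hsum
  have hρC : (Complex.I * (ρ:ℂ)) ≠ 0 := by
    simp [Complex.I_ne_zero, Complex.ofReal_ne_zero, ne_of_gt hρpos]
  -- range Θ ≤ ker Θm
  have hle : LinearMap.range Θ.mulVecLin ≤ LinearMap.ker Θm.mulVecLin := by
    rintro x ⟨y, rfl⟩
    simp only [LinearMap.mem_ker]
    have : Θm.mulVecLin (Θ.mulVecLin y) = (Θm * Θ).mulVecLin y := by
      rw [Matrix.mulVecLin_mul]; rfl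
    rw [this, hmul]
    simp
  -- two independent columns give rank ≥ 2 for a matrix of this shape
  have key : ∀ (c : ℂ) (M : Matrix (Fin 4) (Fin 4) ℂ),
      M = !![c, 0, -(Complex.I*ρ), (ξ1:ℂ) - Complex.I*ξ2;
       0, c, (ξ1:ℂ) + Complex.I*ξ2, Complex.I*ρ;
       -(Complex.I*ρ), (ξ1:ℂ) - Complex.I*ξ2, c, 0;
       (ξ1:ℂ) + Complex.I*ξ2, Complex.I*ρ, 0, c] →
      2 ≤ Module.finrank ℂ (LinearMap.range M.mulVecLin) := by
    intro c M hM
    set v1 : Fin 4 → ℂ := ![c, 0, -(Complex.I*ρ), (ξ1:ℂ) + Complex.I*ξ2] with hv1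
    set v2 : Fin 4 → ℂ := ![(ξ1:ℂ) - Complex.I*ξ2, Complex.I*ρ, 0, c] with hv2
    have hc1 : M.mulVecLin (Pi.single 0 1) = v1 := by
      ext i; fin_cases i <;>
        simp [hM, hv1, Matrix.mulVecLin, Matrix.mulVec, dotProduct,
          Fin.sum_univ_four, Pi.single]
    have hc2 : M.mulVecLin (Pi.single 3 1) = v2 := by
      ext i; fin_cases i <;>
        simp [hM, hv2, Matrix.mulVecLin, Matrix.mulVec, dotProduct,
          Fin.sum_univ_four, Pi.single]
    have hind : LinearIndependent ℂ ![v1, v2] := by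
      rw [LinearIndependent.pair_iff]
      intro s t hst
      have h1 := congrFun hst 1
      have h2 := congrFun hst 2
      simp [hv1, hv2] at h1 h2
      have ht : t = 0 := by
        rcases h1 with h | h
        · exact h
        · exact absurd h hρpos.ne'
      have hs : s = 0 := by
        rcases h2 with h | h
        · exact h
        · exact absurd h hρpos.ne'
      exact ⟨hs, ht⟩
    have hspan : Submodule.span ℂ (Set.range ![v1, v2]) ≤
        LinearMap.range M.mulVecLin := by
      rw [Submodule.span_le]
      rintro x ⟨i, rfl⟩
      fin_cases i
      · exact ⟨Pi.single 0 1, hc1⟩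
      · exact ⟨Pi.single 3 1, hc2⟩
    have hcard : Module.finrank ℂ (Submodule.span ℂ (Set.range ![v1, v2])) = 2 := by
      rw [finrank_span_eq_card hind]
      simp
    calc (2:ℕ) = Module.finrank ℂ (Submodule.span ℂ (Set.range ![v1, v2])) := hcard.symm
      _ ≤ Module.finrank ℂ (LinearMap.range M.mulVecLin) := Submodule.finrank_mono hspan
  have hrk1 : 2 ≤ Module.finrank ℂ (LinearMap.range Θ.mulVecLin) := key _ _ hΘ
  have hrk2 : 2 ≤ Module.finrank ℂ (LinearMap.range Θm.mulVecLin) := key _ _ hΘm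
  have hrn : Module.finrank ℂ (LinearMap.range Θm.mulVecLin) +
      Module.finrank ℂ (LinearMap.ker Θm.mulVecLin) = 4 := by
    rw [LinearMap.finrank_range_add_finrank_ker]
    simp
  have hker_le : Module.finrank ℂ (LinearMap.ker Θm.mulVecLin) ≤ 2 := by omega
  have hle' : Module.finrank ℂ (LinearMap.range Θ.mulVecLin) ≤
      Module.finrank ℂ (LinearMap.ker Θm.mulVecLin) := Submodule.finrank_mono hle
  have hr2 : Module.finrank ℂ (LinearMap.range Θ.mulVecLin) = 2 := le_antisymm (by omega) hrk1
  have hk2 : Module.finrank ℂ (LinearMap.ker Θm.mulVecLin) = 2 := by omega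
  have heq : LinearMap.range Θ.mulVecLin = LinearMap.ker Θm.mulVecLin :=
    Submodule.eq_of_le_of_finrank_eq hle (by omega)
  exact ⟨heq.symm, hk2, hr2⟩
end

section
/- Fix ξ' = (ξ₁,ξ₂) ∈ ℝ² and μ ∈ ℝ, let ρ = √(ξ₁²+ξ₂²+μ²), ς = ξ₁ + iξ₂, and define h₁ = (iμ, 0, −iρ, ς) ∈ ℂ⁴ and h₂ = (conj(ς), iρ, 0, iμ) ∈ ℂ⁴. Then h₁ and h₂ are orthogonal with respect to the standard Hermitian inner product on ℂ⁴, both satisfy Θ₋ h = 0 where Θ₋ = [[−iμ I₂, Λ],[Λ, −iμ I₂]] with Λ = ξ₁σ₁ + ξ₂σ₂ − iρσ₃, and if (ξ',μ) ≠ (0,0) they form a basis of the kernel of Θ₋. -/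
open Matrix Complex

lemma pauli_combination (ξ1 ξ2 : ℝ) (c : ℂ) :
    (ξ1 : ℂ) • σ1 + (ξ2 : ℂ) • σ2 - c • σ3 =
      !![-c, starRingEnd ℂ (ξ1 + I * ξ2); ξ1 + I * ξ2, c] := by
  have hconj : starRingEnd ℂ (ξ1 + I * ξ2) = ξ1 - I * ξ2 := by
    simp [conj_ofReal, sub_eq_add_neg]
  rw [hconj]
  ext i j
  fin_cases i <;> fin_cases j <;> simp [σ1, σ2, σ3] <;> ring

def thetaMatrix {K : Type*} [Neg K] [Zero K] (m r s t : K) : Matrix (Fin 4) (Fin 4) K :=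
  !![-m, 0, -r, t; 0, -m, s, r; -r, t, -m, 0; s, r, 0, -m]

section CommRing

variable {K : Type*} [CommRing K] {m r s t : K}

lemma thetaMatrix_mulVec_left (h : m ^ 2 = r ^ 2 + s * t) :
    thetaMatrix m r s t *ᵥ ![m, 0, -r, s] = 0 := by
  ext i
  fin_cases i <;> simp [thetaMatrix, mulVec, dotProduct, Fin.sum_univ_four] <;>
    first | ring1 | linear_combination -h

lemma thetaMatrix_mulVec_right (h : m ^ 2 = r ^ 2 + s * t) :
    thetaMatrix m r s t *ᵥ ![t, r, 0, m] = 0 := by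
  ext i
  fin_cases i <;> simp [thetaMatrix, mulVec, dotProduct, Fin.sum_univ_four] <;>
    first | ring1 | linear_combination -h

lemma smul_eq_of_thetaMatrix_mulVec_eq_zero {v : Fin 4 → K}
    (hv : thetaMatrix m r s t *ᵥ v = 0) :
    r • v = -v 2 • ![m, 0, -r, s] + v 1 • ![t, r, 0, m] := by
  have row1 := congrFun hv 1
  have row2 := congrFun hv 2
  simp only [thetaMatrix, mulVec, dotProduct, Fin.sum_univ_four, of_apply, cons_val', cons_val,
    cons_val_zero, cons_val_one, cons_val_fin_one, Pi.zero_apply, zero_mul, neg_mul, zero_add,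
    add_zero] at row1 row2
  ext i
  fin_cases i <;>
    simp only [Fin.zero_eta, Fin.mk_one, Fin.reduceFinMk, Pi.add_apply, Pi.smul_apply, smul_eq_mul,
      cons_val_zero, cons_val_one, cons_val]
  · linear_combination -row2
  · ring
  · ring
  · linear_combination row1

end CommRing

section Field

variable {K : Type*} [Field K] {m r s t : K}

lemma linearIndependent_thetaMatrix_nullVectors (hr : r ≠ 0) :
    LinearIndependent K ![![m, 0, -r, s], ![t, r, 0, m]] := by
  rw [LinearIndependent.pair_iff]
  intro a b hab
  have h1 := congrFun hab 1
  have h2 := congrFun hab 2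
  simp only [Pi.add_apply, Pi.smul_apply, Matrix.cons_val, smul_eq_mul, Pi.zero_apply] at h1 h2
  simp_all

lemma span_eq_ker_thetaMatrix (h : m ^ 2 = r ^ 2 + s * t) (hr : r ≠ 0) :
    Submodule.span K {![m, 0, -r, s], ![t, r, 0, m]} =
      LinearMap.ker (thetaMatrix m r s t).mulVecLin := by
  refine le_antisymm ?_ fun v hv => ?_
  · rw [Submodule.span_le, Set.insert_subset_iff, Set.singleton_subset_iff]
    exact ⟨thetaMatrix_mulVec_left h, thetaMatrix_mulVec_right h⟩
  · have hv' := smul_eq_of_thetaMatrix_mulVec_eq_zero hv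
    rw [Submodule.mem_span_pair]
    refine ⟨-v 2 / r, v 1 / r, ?_⟩
    rw [div_eq_inv_mul, div_eq_inv_mul, ← smul_smul, ← smul_smul, ← smul_add, ← hv',
      smul_smul, inv_mul_cancel₀ hr, one_smul]

end Field

lemma blockMat_eq_thetaMatrix (m r s t : ℂ) :
    blockMat (-m • 1) !![-r, t; s, r] !![-r, t; s, r] (-m • 1) = thetaMatrix m r s t := by
  rw [blockMat_eq, thetaMatrix]
  simp

lemma sq_add_sq_add_sq_pos {a b c : ℝ} (h : (a, b, c) ≠ (0, 0, 0)) :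
    0 < a ^ 2 + b ^ 2 + c ^ 2 := by
  contrapose! h
  obtain ⟨ha, hb, hc⟩ : a ^ 2 = 0 ∧ b ^ 2 = 0 ∧ c ^ 2 = 0 := by
    refine ⟨?_, ?_, ?_⟩ <;> linarith [sq_nonneg a, sq_nonneg b, sq_nonneg c]
  simp_all

/-- For ξ' ∈ ℝ², μ ∈ ℝ, ρ = √(|ξ'|²+μ²), ς = ξ₁+iξ₂, the vectors
h₁ = (iμ,0,−iρ,ς) and h₂ = (conj ς, iρ, 0, iμ) are orthogonal, satisfy
Θ₋ h = 0 for Θ₋ = [[−iμI₂,Λ],[Λ,−iμI₂]], Λ = ξ₁σ₁+ξ₂σ₂−iρσ₃, and if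
(ξ',μ) ≠ 0 they form a basis of ker Θ₋. -/
theorem kernel_basis_h1_h2 (ξ1 ξ2 μ : ℝ) :
    let ρ : ℝ := Real.sqrt (ξ1 ^ 2 + ξ2 ^ 2 + μ ^ 2)
    let ς : ℂ := (ξ1 : ℂ) + Complex.I * (ξ2 : ℂ)
    let Λ : Matrix (Fin 2) (Fin 2) ℂ :=
      (ξ1 : ℂ) • σ1 + (ξ2 : ℂ) • σ2 - (Complex.I * (ρ : ℂ)) • σ3
    let Θm : Matrix (Fin 4) (Fin 4) ℂ :=
      blockMat ((-(Complex.I * (μ : ℂ))) • 1) Λ Λ ((-(Complex.I * (μ : ℂ))) • 1)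
    let h1 : Fin 4 → ℂ := ![Complex.I * (μ : ℂ), 0, -(Complex.I * (ρ : ℂ)), ς]
    let h2 : Fin 4 → ℂ := ![starRingEnd ℂ ς, Complex.I * (ρ : ℂ), 0, Complex.I * (μ : ℂ)]
    (star h2) ⬝ᵥ h1 = 0 ∧ Θm.mulVec h1 = 0 ∧ Θm.mulVec h2 = 0 ∧
      ((ξ1, ξ2, μ) ≠ (0, 0, 0) →
        LinearIndependent ℂ ![h1, h2] ∧
        Submodule.span ℂ {h1, h2} = LinearMap.ker Θm.mulVecLin) := by
  intro ρ ς Λ Θm h1 h2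
  have hΘ : Θm = thetaMatrix (I * μ) (I * ρ) ς (starRingEnd ℂ ς) := by
    simp only [Θm, Λ, pauli_combination, blockMat_eq_thetaMatrix, ς]
  have hρ : (ρ : ℂ) ^ 2 = ξ1 ^ 2 + ξ2 ^ 2 + μ ^ 2 := by
    exact_mod_cast Real.sq_sqrt (by positivity)
  have hsq : (I * μ) ^ 2 = (I * ρ) ^ 2 + ς * starRingEnd ℂ ς := by
    simp only [ς, map_add, map_mul, conj_ofReal, conj_I]
    linear_combination ((μ : ℂ) ^ 2 - ρ ^ 2 + ξ2 ^ 2) * I_sq + hρ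
  rw [hΘ]
  refine ⟨?_, thetaMatrix_mulVec_left hsq, thetaMatrix_mulVec_right hsq, fun hne => ?_⟩
  · simp only [h1, h2, dotProduct, Fin.sum_univ_four, Pi.star_apply, RCLike.star_def, cons_val,
      cons_val_zero, cons_val_one, map_mul, map_zero, conj_I, conj_ofReal,
      RingHomCompTriple.comp_apply, RingHom.id_apply]
    ring
  have hr : I * (ρ : ℂ) ≠ 0 :=
    mul_ne_zero I_ne_zero (ofReal_ne_zero.mpr (Real.sqrt_ne_zero'.mpr (sq_add_sq_add_sq_pos hne)))
  exact ⟨linearIndependent_thetaMatrix_nullVectors hr, span_eq_ker_thetaMatrix hsq hr⟩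
end

section
/- Fix a ∈ ℝ with a ≠ 0, and ξ' = (ξ₁,ξ₂) ∈ ℝ², μ ∈ ℝ with (ξ',μ) ≠ (0,0); let ρ = √(ξ₁²+ξ₂²+μ²). Then μρ(a² − 1) + 2 i a ρ² ≠ 0; in particular the parameter-dependent Lopatinsky–Shapiro determinant of the generalized MIT bag boundary condition does not vanish on the sphere ξ₁² + ξ₂² + μ² = 1. -/
/-- For a ≠ 0 and (ξ',μ) ≠ (0,0), with ρ = √(ξ₁²+ξ₂²+μ²), the parameter-dependent
Lopatinsky–Shapiro determinant μρ(a²−1) + 2iaρ² of the generalized MIT bag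
boundary condition does not vanish. -/
theorem LS_determinant_nonzero (a ξ1 ξ2 μ : ℝ) (ha : a ≠ 0)
    (hξμ : (ξ1, ξ2, μ) ≠ (0, 0, 0)) :
    let ρ : ℝ := Real.sqrt (ξ1 ^ 2 + ξ2 ^ 2 + μ ^ 2)
    (μ : ℂ) * (ρ : ℂ) * ((a : ℂ) ^ 2 - 1) +
      2 * Complex.I * (a : ℂ) * (ρ : ℂ) ^ 2 ≠ 0 := by
  intro ρ
  have hsum : 0 < ξ1 ^ 2 + ξ2 ^ 2 + μ ^ 2 := by
    rcases lt_or_eq_of_le (by positivity : (0:ℝ) ≤ ξ1 ^ 2 + ξ2 ^ 2 + μ ^ 2) with h | h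
    · exact h
    · exfalso
      have h1 : ξ1 = 0 ∧ ξ2 = 0 ∧ μ = 0 := by
        constructor
        · nlinarith [sq_nonneg ξ1, sq_nonneg ξ2, sq_nonneg μ]
        constructor
        · nlinarith [sq_nonneg ξ1, sq_nonneg ξ2, sq_nonneg μ]
        · nlinarith [sq_nonneg ξ1, sq_nonneg ξ2, sq_nonneg μ]
      exact hξμ (by simp [h1.1, h1.2.1, h1.2.2])
  have hρ : 0 < ρ := Real.sqrt_pos.mpr hsum
  intro h
  have him := congrArg Complex.im h
  simp [Complex.add_im, Complex.mul_im, Complex.mul_re, Complex.I_re, Complex.I_im,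
    Complex.ofReal_re, Complex.ofReal_im, pow_two] at him
  rcases him with him | him
  · exact ha him
  · exact hρ.ne' him
end

section
/- Fix ξ' = (ξ₁,ξ₂) ∈ ℝ² and a ∈ ℝ; let ς = ξ₁ + iξ₂ and Λ₀ = ξ₁σ₁ + ξ₂σ₂ − i|ξ'|σ₃, where |ξ'| = √(ξ₁²+ξ₂²). Then the determinant of the 2×2 matrix whose columns are Λ₀ e₁ and i a σ₃ (Λ₀ e₂) equals −2 i a |ξ'|²; in particular it is nonzero whenever a ≠ 0 and ξ' ≠ 0, so the standard Lopatinsky–Shapiro condition holds for the generalized MIT bag boundary condition. -/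
open Matrix Complex

/-- The standard Lopatinsky–Shapiro determinant of the generalized MIT bag boundary
condition: the matrix with columns Λ₀e₁ and iaσ₃(Λ₀e₂), where
Λ₀ = ξ₁σ₁ + ξ₂σ₂ − i|ξ'|σ₃, has determinant −2ia|ξ'|²; in particular it is
nonzero whenever a ≠ 0 and ξ' ≠ 0. -/
theorem LS_determinant_standard (ξ1 ξ2 a : ℝ) :
    let nξ : ℝ := Real.sqrt (ξ1 ^ 2 + ξ2 ^ 2)
    let Λ0 : Matrix (Fin 2) (Fin 2) ℂ :=
      (ξ1 : ℂ) • σ1 + (ξ2 : ℂ) • σ2 - (Complex.I * (nξ : ℂ)) • σ3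
    let c1 : Fin 2 → ℂ := Λ0.mulVec ![1, 0]
    let c2 : Fin 2 → ℂ := (Complex.I * (a : ℂ)) • σ3.mulVec (Λ0.mulVec ![0, 1])
    let M : Matrix (Fin 2) (Fin 2) ℂ := (Matrix.of ![c1, c2])ᵀ
    M.det = -(2 * Complex.I * (a : ℂ) * ((nξ : ℂ)) ^ 2) ∧
      (a ≠ 0 → (ξ1, ξ2) ≠ (0, 0) → M.det ≠ 0) := by
  intro nξ Λ0 c1 c2 M
  have hdet : M.det = -(2 * Complex.I * (a : ℂ) * ((nξ : ℂ)) ^ 2) := by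
    have hn : ((nξ : ℂ)) ^ 2 = (ξ1 : ℂ) ^ 2 + (ξ2 : ℂ) ^ 2 := by
      have h0 : nξ ^ 2 = ξ1 ^ 2 + ξ2 ^ 2 := Real.sq_sqrt (by positivity)
      exact_mod_cast congrArg Complex.ofReal h0
    simp only [M, c1, c2, Λ0, σ1, σ2, σ3, Matrix.det_fin_two, Matrix.transpose_apply,
      Matrix.of_apply, Matrix.cons_val', Matrix.cons_val_zero, Matrix.cons_val_one,
      Matrix.head_cons, Matrix.mulVec, dotProduct, Pi.smul_apply, smul_eq_mul,
      Fin.sum_univ_two, Matrix.add_apply, Matrix.sub_apply, Matrix.smul_apply,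
      Matrix.cons_val_fin_one, Matrix.empty_val', Matrix.cons_val', Matrix.head_fin_const]
    ring_nf
    rw [show ((nξ:ℂ))^2 = (ξ1 : ℂ) ^ 2 + (ξ2 : ℂ) ^ 2 from hn]
    simp only [show (Complex.I)^3 = -Complex.I by rw [pow_succ, Complex.I_sq]; ring]
    ring
  refine ⟨hdet, fun ha hξ => ?_⟩
  rw [hdet]
  have hn : nξ ≠ 0 := by
    simp only [nξ]
    intro h
    have := Real.sqrt_eq_zero (by positivity) |>.mp h
    have h1 : ξ1 = 0 := by nlinarith [sq_nonneg ξ1, sq_nonneg ξ2]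
    have h2 : ξ2 = 0 := by nlinarith [sq_nonneg ξ1, sq_nonneg ξ2]
    exact hξ (by simp [h1, h2])
  simp [Complex.ext_iff, ha, hn]
end

section
/- Fix ξ' = (ξ₁,ξ₂) ∈ ℝ² and m, λ ∈ ℝ with λ² < ξ₁² + ξ₂² + m²; let ρ = √(ξ₁²+ξ₂²+m²−λ²), ς = ξ₁ + iξ₂, and Λ = ξ₁σ₁ + ξ₂σ₂ − iρσ₃. Define h₁ = ((λ+m)e₁, Λe₁) and h₂ = (Λe₂, (λ−m)e₂) in ℂ⁴ = ℂ² ⊕ ℂ². Then the determinant of the 2×2 matrix whose columns are h₁¹ + iσ₃ h₁² and h₂¹ + iσ₃ h₂² equals 2 i ρ (ρ + m). (Explicitly, this matrix is [[λ + m + ρ, conj(ς)],[−iς, iρ − i(λ − m)]].) -/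
open Matrix Complex

/-- The determinant governing decaying solutions of the half-space MIT bag model:
with ρ = √(ξ₁²+ξ₂²+m²−λ²), Λ = ξ₁σ₁+ξ₂σ₂−iρσ₃, h₁ = ((λ+m)e₁, Λe₁),
h₂ = (Λe₂, (λ−m)e₂), the matrix with columns h₁¹ + iσ₃h₁² and h₂¹ + iσ₃h₂², which
equals [[λ+m+ρ, conj ς],[−iς, iρ − i(λ−m)]], has determinant 2iρ(ρ+m). -/
theorem MIT_halfspace_determinant (ξ1 ξ2 m lam : ℝ)
    (hlt : lam ^ 2 < ξ1 ^ 2 + ξ2 ^ 2 + m ^ 2) :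
    let ρ : ℝ := Real.sqrt (ξ1 ^ 2 + ξ2 ^ 2 + m ^ 2 - lam ^ 2)
    let ς : ℂ := (ξ1 : ℂ) + Complex.I * (ξ2 : ℂ)
    let Λ : Matrix (Fin 2) (Fin 2) ℂ :=
      (ξ1 : ℂ) • σ1 + (ξ2 : ℂ) • σ2 - (Complex.I * (ρ : ℂ)) • σ3
    let h11 : Fin 2 → ℂ := ((lam : ℂ) + (m : ℂ)) • ![1, 0]
    let h12 : Fin 2 → ℂ := Λ.mulVec ![1, 0]
    let h21 : Fin 2 → ℂ := Λ.mulVec ![0, 1]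
    let h22 : Fin 2 → ℂ := ((lam : ℂ) - (m : ℂ)) • ![0, 1]
    let c1 : Fin 2 → ℂ := h11 + Complex.I • σ3.mulVec h12
    let c2 : Fin 2 → ℂ := h21 + Complex.I • σ3.mulVec h22
    let M : Matrix (Fin 2) (Fin 2) ℂ := (Matrix.of ![c1, c2])ᵀ
    M = !![(lam : ℂ) + (m : ℂ) + (ρ : ℂ), starRingEnd ℂ ς;
           -(Complex.I * ς), Complex.I * (ρ : ℂ) - Complex.I * ((lam : ℂ) - (m : ℂ))] ∧
      M.det = 2 * Complex.I * (ρ : ℂ) * ((ρ : ℂ) + (m : ℂ)) := by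
  intro ρ ς Λ h11 h12 h21 h22 c1 c2 M
  have hρ2 : (ρ:ℂ) * (ρ:ℂ) = (ξ1:ℂ)^2 + (ξ2:ℂ)^2 + (m:ℂ)^2 - (lam:ℂ)^2 := by
    have h : ρ * ρ = ξ1 ^ 2 + ξ2 ^ 2 + m ^ 2 - lam ^ 2 :=
      Real.mul_self_sqrt (by linarith)
    rw [← Complex.ofReal_mul, h]
    push_cast
    ring
  have hM : M = !![(lam : ℂ) + (m : ℂ) + (ρ : ℂ), starRingEnd ℂ ς;
           -(Complex.I * ς), Complex.I * (ρ : ℂ) - Complex.I * ((lam : ℂ) - (m : ℂ))] := by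
    ext i j
    fin_cases i <;> fin_cases j <;>
      simp [M, c1, c2, h11, h12, h21, h22, Λ, ς, σ1, σ2, σ3, Matrix.mulVec,
        dotProduct, Fin.sum_univ_two, Matrix.vecHead, Matrix.vecTail,
        Function.comp, Complex.ext_iff] <;> ring
  refine ⟨hM, ?_⟩
  rw [hM, Matrix.det_fin_two_of]
  simp only [ς, map_add, RingHom.map_mul, Complex.conj_I, Complex.conj_ofReal]
  linear_combination (-Complex.I) * hρ2 + (-(Complex.I * (ξ2:ℂ)^2)) * Complex.I_sq
end

section
/- Fix ξ' = (ξ₁,ξ₂) ∈ ℝ² and m, λ ∈ ℝ with λ² < ξ₁² + ξ₂² + m², and let ρ = √(ξ₁²+ξ₂²+m²−λ²). If m ≥ 0 then 2 i ρ (ρ + m) ≠ 0. If m < 0 then 2 i ρ (ρ + m) = 0 if and only if ρ = −m, which holds if and only if λ² = ξ₁² + ξ₂². (Consequently the half-space MIT bag model has no decaying bound states when m ≥ 0, and for m < 0 it has the eigenvalues λ = ±|ξ'|.) -/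
/-- With λ² < ξ₁²+ξ₂²+m² and ρ = √(ξ₁²+ξ₂²+m²−λ²): if m ≥ 0 then 2iρ(ρ+m) ≠ 0;
if m < 0 then 2iρ(ρ+m) = 0 iff ρ = −m, which holds iff λ² = ξ₁² + ξ₂². -/
theorem MIT_halfspace_determinant_vanishing (ξ1 ξ2 m lam : ℝ)
    (hlt : lam ^ 2 < ξ1 ^ 2 + ξ2 ^ 2 + m ^ 2) :
    let ρ : ℝ := Real.sqrt (ξ1 ^ 2 + ξ2 ^ 2 + m ^ 2 - lam ^ 2)
    (m ≥ 0 → 2 * Complex.I * (ρ : ℂ) * ((ρ : ℂ) + (m : ℂ)) ≠ 0) ∧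
      (m < 0 →
        ((2 * Complex.I * (ρ : ℂ) * ((ρ : ℂ) + (m : ℂ)) = 0 ↔ ρ = -m) ∧
          (ρ = -m ↔ lam ^ 2 = ξ1 ^ 2 + ξ2 ^ 2))) := by
  intro ρ
  have hpos : 0 < ξ1 ^ 2 + ξ2 ^ 2 + m ^ 2 - lam ^ 2 := by linarith
  have hρpos : 0 < ρ := Real.sqrt_pos.mpr hpos
  have hρsq : ρ ^ 2 = ξ1 ^ 2 + ξ2 ^ 2 + m ^ 2 - lam ^ 2 := Real.sq_sqrt hpos.le
  have hρC : (ρ : ℂ) ≠ 0 := by exact_mod_cast hρpos.ne'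
  constructor
  · intro hm h
    have hsum : (ρ : ℂ) + (m : ℂ) ≠ 0 := by
      have : (0:ℝ) < ρ + m := by linarith
      exact_mod_cast this.ne'
    have h2I : (2 : ℂ) * Complex.I ≠ 0 := by
      simp [Complex.I_ne_zero]
    exact (mul_ne_zero (mul_ne_zero h2I hρC) hsum) h
  · intro hm
    constructor
    · constructor
      · intro h
        have h2I : (2 : ℂ) * Complex.I ≠ 0 := by simp [Complex.I_ne_zero]
        have : (ρ : ℂ) + (m : ℂ) = 0 := by
          rcases mul_eq_zero.mp h with h' | h'
          · rcases mul_eq_zero.mp h' with h'' | h''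
            · exact absurd h'' h2I
            · exact absurd h'' hρC
          · exact h'
        have : ρ + m = 0 := by exact_mod_cast this
        linarith
      · intro h
        have : (ρ : ℂ) + (m : ℂ) = 0 := by
          have : ρ + m = 0 := by linarith
          exact_mod_cast this
        rw [this, mul_zero]
    · constructor
      · intro h
        have : ρ ^ 2 = m ^ 2 := by rw [h]; ring
        linarith [hρsq]
      · intro h
        have : ρ ^ 2 = (-m) ^ 2 := by rw [hρsq]; linarith
        have hm' : 0 < -m := by linarith
        nlinarith [hρpos]
end

section
/- Fix ξ' = (ξ₁,ξ₂) ∈ ℝ² and m, λ ∈ ℝ with λ² < ξ₁² + ξ₂² + m²; let ρ = √(ξ₁²+ξ₂²+m²−λ²), ς = ξ₁ + iξ₂, and Λ = ξ₁σ₁ + ξ₂σ₂ − iρσ₃. Then the vectors h₁ = (λ+m, 0, −iρ, ς) and h₂ = (conj(ς), iρ, 0, λ−m) in ℂ⁴ are linearly independent and both satisfy (ξ₁α₁ + ξ₂α₂ − iρ α₃ + m α₀ − λ I₄) h = 0. -/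
open Matrix Complex

/-- With λ² < ξ₁²+ξ₂²+m², ρ = √(ξ₁²+ξ₂²+m²−λ²) and ς = ξ₁+iξ₂, the vectors
h₁ = (λ+m, 0, −iρ, ς) and h₂ = (conj ς, iρ, 0, λ−m) are linearly independent and
both satisfy (ξ₁α₁ + ξ₂α₂ − iρα₃ + mα₀ − λI₄) h = 0. -/
theorem MIT_halfspace_kernel_vectors (ξ1 ξ2 m lam : ℝ)
    (hlt : lam ^ 2 < ξ1 ^ 2 + ξ2 ^ 2 + m ^ 2) :
    let ρ : ℝ := Real.sqrt (ξ1 ^ 2 + ξ2 ^ 2 + m ^ 2 - lam ^ 2)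
    let ς : ℂ := (ξ1 : ℂ) + Complex.I * (ξ2 : ℂ)
    let M : Matrix (Fin 4) (Fin 4) ℂ :=
      (ξ1 : ℂ) • α1 + (ξ2 : ℂ) • α2 - (Complex.I * (ρ : ℂ)) • α3 +
        (m : ℂ) • α0 - (lam : ℂ) • (1 : Matrix (Fin 4) (Fin 4) ℂ)
    let h1 : Fin 4 → ℂ := ![(lam : ℂ) + (m : ℂ), 0, -(Complex.I * (ρ : ℂ)), ς]
    let h2 : Fin 4 → ℂ := ![starRingEnd ℂ ς, Complex.I * (ρ : ℂ), 0, (lam : ℂ) - (m : ℂ)]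
    LinearIndependent ℂ ![h1, h2] ∧ M.mulVec h1 = 0 ∧ M.mulVec h2 = 0 := by
  intro ρ ς M h1 h2
  have hr : ρ^2 = ξ1^2+ξ2^2+m^2-lam^2 := Real.sq_sqrt (by linarith)
  have hρ2 : (ρ:ℂ)^2 = (ξ1:ℂ)^2 + (ξ2:ℂ)^2 + (m:ℂ)^2 - (lam:ℂ)^2 := by
    exact_mod_cast congrArg Complex.ofReal hr
  have hρpos : (0:ℝ) < ρ := Real.sqrt_pos.2 (by linarith)
  have hρne : (ρ:ℂ) ≠ 0 := by exact_mod_cast hρpos.ne'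
  have hone : (1 : Matrix (Fin 4) (Fin 4) ℂ) = !![1,0,0,0;0,1,0,0;0,0,1,0;0,0,0,1] := by
    ext i j
    fin_cases i <;> fin_cases j <;> simp [Matrix.one_apply, Matrix.vecHead, Matrix.vecTail]
  refine ⟨?_, ?_, ?_⟩
  · rw [LinearIndependent.pair_iff]
    intro a b hab
    have e1 := congrFun hab 1
    have e2 := congrFun hab 2
    simp [h1, h2, Complex.I_ne_zero, hρne] at e1 e2
    exact ⟨e2, e1⟩
  · funext i
    fin_cases i <;>
      simp [M, h1, ς, hone, Matrix.mulVec, dotProduct, Fin.sum_univ_succ,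
        α0, α1, α2, α3] <;>
      first
        | ring1
        | (ring_nf
           simp only [Complex.I_sq]
           first | ring1 | linear_combination hρ2 | linear_combination -hρ2)
  · funext i
    fin_cases i <;>
      simp [M, h2, ς, hone, Matrix.mulVec, dotProduct, Fin.sum_univ_succ,
        α0, α1, α2, α3, map_add, _root_.map_mul, Complex.conj_I] <;>
      first
        | ring1
        | (ring_nf
           simp only [Complex.I_sq]
           first | ring1 | linear_combination hρ2 | linear_combination -hρ2)
end
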